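/- arXiv:2008.09107 — 2 statements merged into one kernel-verified Lean document; each statement's English description precedes it below -/
import Mathlib

section
/- (Lovász) For every finite digraph D and root r ∈ V(D), there exists a spanning subgraph H of D such that for every v ∈ V(D)−r, λ_D(r,v) = λ_H(r,v) = ϱ_H(v), where ϱ_H(v) is the in-degree of v in H. -/
attribute [local instance] Classical.propDecidable

/-- A finite digraph: edges `E` with tail and head maps (parallel edges allowed). -/
structure Digraph' (V E : Type) where
  tail : E → V
  head : E → V

namespace Digraph'

variable {V E : Type} [Fintype V] [Fintype E]

/-- `es` is a directed walk from `r` to `v`. -/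
def IsWalk (D : Digraph' V E) : V → V → List E → Prop
  | r, v, [] => r = v
  | r, v, e :: es => D.tail e = r ∧ D.IsWalk (D.head e) v es

/-- `es` is a directed path from `r` to `v` using only edges of `F`. -/
def IsPathIn (D : Digraph' V E) (F : Set E) (r v : V) (es : List E) : Prop :=
  D.IsWalk r v es ∧ (∀ e ∈ es, e ∈ F) ∧ (r :: es.map D.head).Nodup

/-- The members of a list of paths are pairwise edge-disjoint. -/
def EdgeDisjoint (P : List (List E)) : Prop :=
  P.Pairwise (fun p q => ∀ e, e ∈ p → e ∉ q)

/-- The maximum number of pairwise edge-disjoint `r → v` paths inside `F`. -/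
noncomputable def lam (D : Digraph' V E) (F : Set E) (r v : V) : ℕ :=
  sSup {k | ∃ P : List (List E), P.length = k ∧ (∀ p ∈ P, D.IsPathIn F r v p) ∧
    EdgeDisjoint P}

/-- The set of edges of `F` whose head is `v`. -/
def inEdges (D : Digraph' V E) (F : Set E) (v : V) : Set E := {e ∈ F | D.head e = v}

/-- The in-degree of `v` in the subgraph `F`. -/
noncomputable def indeg (D : Digraph' V E) (F : Set E) (v : V) : ℕ :=
  (D.inEdges F v).ncard

/-- `I` arises as the set of last edges of a system of pairwise edge-disjoint
`r → v` paths in `F` (membership in the gammoid `G_F(v)`). -/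
def InGammoid (D : Digraph' V E) (F : Set E) (r v : V) (I : Set E) : Prop :=
  ∃ P : List (List E), (∀ p ∈ P, D.IsPathIn F r v p) ∧ EdgeDisjoint P ∧
    I = {e | ∃ p ∈ P, p.getLast? = some e}

/-- `F` is an `r`-flame: the in-degree of each `v ≠ r` equals λ_F(r,v). -/
def IsFlame (D : Digraph' V E) (r : V) (F : Set E) : Prop :=
  ∀ v, v ≠ r → D.indeg F v = D.lam F r v

/-- Total of `x` on the in-edges of `v`. -/
noncomputable def inflow (D : Digraph' V E) (x : E → ℝ) (v : V) : ℝ :=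
  ∑ e, if D.head e = v then x e else 0

/-- Total of `x` on the out-edges of `v`. -/
noncomputable def outflow (D : Digraph' V E) (x : E → ℝ) (v : V) : ℝ :=
  ∑ e, if D.tail e = v then x e else 0

/-- Total of `x` on the edges entering the vertex set `W`. -/
noncomputable def rhoSet (D : Digraph' V E) (x : E → ℝ) (W : Set V) : ℝ :=
  ∑ e, if D.head e ∈ W ∧ D.tail e ∉ W then x e else 0

/-- `x` is a (nonnegative) `r → v` flow. -/
def IsFlow (D : Digraph' V E) (r v : V) (x : E → ℝ) : Prop :=
  (∀ e, 0 ≤ x e) ∧ (∀ u, u ≠ r → u ≠ v → D.inflow x u = D.outflow x u) ∧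
    D.inflow x r = 0 ∧ D.outflow x v = 0

/-- The flow-connectivity from `r` to `v` under capacity `c`. -/
noncomputable def lamF (D : Digraph' V E) (r v : V) (c : E → ℝ) : ℝ :=
  sSup {a | ∃ x, D.IsFlow r v x ∧ x ≤ c ∧ D.outflow x r = a}

/-- Characteristic vector of an edge. -/
noncomputable def chi (e : E) : E → ℝ := fun e' => if e' = e then 1 else 0

/-- Restriction of `x` to the in-edges of `v` (zero elsewhere). -/
noncomputable def restrictIn (D : Digraph' V E) (v : V) (x : E → ℝ) : E → ℝ :=
  fun e => if D.head e = v then x e else 0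

/-- The polygammoid `G_c(v)`: restrictions to the in-edges of `v`
of `r → v` flows bounded by `c`. -/
def polygammoid (D : Digraph' V E) (r v : V) (c : E → ℝ) : Set (E → ℝ) :=
  {s | ∃ x, D.IsFlow r v x ∧ x ≤ c ∧ D.restrictIn v x = s}

/-- `D` has no parallel edges. -/
def NoParallel (D : Digraph' V E) : Prop :=
  ∀ e e', D.tail e = D.tail e' → D.head e = D.head e' → e = e'

/-- `es` is a directed cycle. -/
def IsCycle (D : Digraph' V E) (es : List E) : Prop :=
  es ≠ [] ∧ ∃ u, D.IsWalk u u es ∧ (es.map D.head).Nodup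

/-- Characteristic vector of a list of edges. -/
noncomputable def charVec (es : List E) : E → ℝ :=
  fun e => ((es.filter (fun e' => e' = e)).length : ℝ)

end Digraph'

/-!
Following Lovász, start from all edges and delete edges one at a time. If some `v ≠ r` has
`λ_F(r,v) < ϱ_F(v)`, a maximum system of edge-disjoint `r → v` paths misses an in-edge `f`
of `v`, so deleting `f` keeps `λ(r,v)`. It keeps every other `λ(r,w)` too: otherwise Menger's
theorem gives a tight cut `W` for `w` entered by `f` and a tight cut `A` for `v`, and
submodularity of the in-cut size makes `A ∩ W` a cut of size `λ(r,v)` entered by `f`, which the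
system avoiding `f` cannot cross. The edge version of Menger's theorem is proved by augmenting
0/1 flows along paths of the residual digraph.
-/

namespace Digraph'

variable {V E : Type} {D : Digraph' V E} {u v w : V} {F : Set E}

section Walks

@[simp] lemma isWalk_nil : D.IsWalk u v [] ↔ u = v := Iff.rfl

lemma IsWalk.append {p q : List E} (hp : D.IsWalk u w p) (hq : D.IsWalk w v q) :
    D.IsWalk u v (p ++ q) := by
  induction p generalizing u with
  | nil => rw [isWalk_nil] at hp; subst hp; exact hq
  | cons e p ih => exact ⟨hp.1, ih hp.2⟩

lemma IsWalk.head_getLast {es : List E} (h : D.IsWalk u v es) (hne : es ≠ []) :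
    D.head (es.getLast hne) = v := by
  induction es generalizing u with
  | nil => exact absurd rfl hne
  | cons e es ih =>
    cases es with
    | nil => exact h.2
    | cons e' es => rw [List.getLast_cons (List.cons_ne_nil _ _)]; exact ih h.2 _

lemma IsWalk.exists_mem_head_mem_tail_notMem {W : Finset V} {es : List E} (h : D.IsWalk u v es)
    (hu : u ∉ W) (hv : v ∈ W) : ∃ e ∈ es, D.head e ∈ W ∧ D.tail e ∉ W := by
  induction es generalizing u with
  | nil => exact absurd (isWalk_nil.1 h ▸ hv) hu
  | cons e es ih =>
    by_cases he : D.head e ∈ W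
    · exact ⟨e, List.mem_cons_self, he, h.1 ▸ hu⟩
    · obtain ⟨e', he', hW⟩ := ih h.2 he
      exact ⟨e', List.mem_cons_of_mem _ he', hW⟩

lemma IsPathIn.mono {F' : Set E} {p : List E} (hp : D.IsPathIn F u v p) (h : F ⊆ F') :
    D.IsPathIn F' u v p :=
  ⟨hp.1, fun e he => h (hp.2.1 e he), hp.2.2⟩

lemma IsPathIn.ne_nil {p : List E} (hp : D.IsPathIn F u v p) (huv : u ≠ v) : p ≠ [] := by
  rintro rfl
  exact huv hp.1

lemma IsPathIn.nodup {p : List E} (hp : D.IsPathIn F u v p) : p.Nodup :=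
  (List.nodup_cons.1 hp.2.2).2.of_map _

lemma IsPathIn.tail {e : E} {p : List E} (hp : D.IsPathIn F u v (e :: p)) :
    D.IsPathIn F (D.head e) v p :=
  ⟨hp.1.2, fun e' he' => hp.2.1 e' (List.mem_cons_of_mem _ he'),
    by simpa using (List.nodup_cons.1 hp.2.2).2⟩

lemma IsPathIn.getLast_eq {p : List E} {e : E} (hp : D.IsPathIn F u v p) (he : e ∈ p)
    (hev : D.head e = v) : p.getLast (List.ne_nil_of_mem he) = e :=
  List.inj_on_of_nodup_map (List.nodup_cons.1 hp.2.2).2 (List.getLast_mem _) he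
    ((hp.1.head_getLast _).trans hev.symm)

lemma IsPathIn.exists_isPathIn_of_mem {p : List E} (hp : D.IsPathIn F u v p)
    (hw : w ∈ u :: p.map D.head) : ∃ q, D.IsPathIn F w v q := by
  induction p generalizing u with
  | nil => exact ⟨[], List.mem_singleton.1 hw ▸ hp⟩
  | cons e p ih =>
    rcases List.mem_cons.1 hw with rfl | hw
    · exact ⟨_, hp⟩
    · exact ih hp.tail (by simpa using hw)

lemma IsWalk.exists_isPathIn {es : List E} (h : D.IsWalk u v es) (hF : ∀ e ∈ es, e ∈ F) :
    ∃ p, D.IsPathIn F u v p := by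
  induction es generalizing u with
  | nil => exact ⟨[], h, by simp, by simp⟩
  | cons e es ih =>
    obtain ⟨p, hp⟩ := ih h.2 fun e' he' => hF e' (List.mem_cons_of_mem _ he')
    by_cases hu : u ∈ D.head e :: p.map D.head
    · exact hp.exists_isPathIn_of_mem hu
    · refine ⟨e :: p, ⟨h.1, hp.1⟩, ?_, List.nodup_cons.2 ⟨by simpa using hu, hp.2.2⟩⟩
      rintro e' (_ | ⟨_, he'⟩)
      exacts [hF e List.mem_cons_self, hp.2.1 e' he']

def ReachableIn (D : Digraph' V E) (F : Set E) (u v : V) : Prop :=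
  ∃ es, D.IsWalk u v es ∧ ∀ e ∈ es, e ∈ F

lemma ReachableIn.refl : D.ReachableIn F u u := ⟨[], rfl, by simp⟩

lemma ReachableIn.step {e : E} (h : D.ReachableIn F u (D.tail e)) (he : e ∈ F) :
    D.ReachableIn F u (D.head e) := by
  obtain ⟨es, hw, hF⟩ := h
  refine ⟨es ++ [e], hw.append ⟨rfl, rfl⟩, fun e' he' => ?_⟩
  rcases List.mem_append.1 he' with he' | he'
  exacts [hF e' he', List.mem_singleton.1 he' ▸ he]

lemma ReachableIn.exists_isPathIn (h : D.ReachableIn F u v) : ∃ p, D.IsPathIn F u v p :=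
  let ⟨_, hw, hF⟩ := h
  hw.exists_isPathIn hF

end Walks

lemma length_le_card_of_forall_exists_mem {P : List (List E)} (hP : EdgeDisjoint P)
    {T : Finset E} (h : ∀ p ∈ P, ∃ e ∈ p, e ∈ T) : P.length ≤ T.card := by
  induction P generalizing T with
  | nil => simp
  | cons p P ih =>
    obtain ⟨e, hep, heT⟩ := h p List.mem_cons_self
    have hP' : P.length ≤ (T.erase e).card := by
      refine ih (List.Pairwise.of_cons hP) fun q hq => ?_
      obtain ⟨e', he'q, he'T⟩ := h q (List.mem_cons_of_mem _ hq)
      refine ⟨e', he'q, Finset.mem_erase.2 ⟨?_, he'T⟩⟩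
      rintro rfl
      exact List.rel_of_pairwise_cons hP hq e' hep he'q
    have := Finset.card_erase_add_one heT
    simp only [List.length_cons]
    omega

section Lam

variable [Fintype E] {r : V}

lemma bddAbove_lam_set (hvr : v ≠ r) :
    BddAbove {k | ∃ P : List (List E), P.length = k ∧ (∀ p ∈ P, D.IsPathIn F r v p) ∧
      EdgeDisjoint P} := by
  refine ⟨Fintype.card E, ?_⟩
  rintro _ ⟨P, rfl, hP, hd⟩
  refine length_le_card_of_forall_exists_mem hd (T := Finset.univ) fun p hp => ?_
  obtain ⟨e, he⟩ := List.exists_mem_of_ne_nil p ((hP p hp).ne_nil hvr.symm)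
  exact ⟨e, he, Finset.mem_univ e⟩

lemma le_lam (hvr : v ≠ r) {P : List (List E)} (hP : ∀ p ∈ P, D.IsPathIn F r v p)
    (hd : EdgeDisjoint P) : P.length ≤ D.lam F r v :=
  le_csSup (bddAbove_lam_set hvr) ⟨P, rfl, hP, hd⟩

lemma exists_edgeDisjoint_length_eq_lam (hvr : v ≠ r) :
    ∃ P : List (List E), P.length = D.lam F r v ∧ (∀ p ∈ P, D.IsPathIn F r v p) ∧
      EdgeDisjoint P :=
  Nat.sSup_mem (s := {k | ∃ P : List (List E), P.length = k ∧
    (∀ p ∈ P, D.IsPathIn F r v p) ∧ EdgeDisjoint P})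
    ⟨0, [], rfl, by simp, List.Pairwise.nil⟩ (bddAbove_lam_set hvr)

lemma lam_mono (hvr : v ≠ r) {F' : Set E} (h : F ⊆ F') : D.lam F r v ≤ D.lam F' r v := by
  obtain ⟨P, hlen, hP, hd⟩ := exists_edgeDisjoint_length_eq_lam (D := D) (F := F) hvr
  exact hlen ▸ le_lam hvr (fun p hp => (hP p hp).mono h) hd

noncomputable def cut (D : Digraph' V E) (F : Set E) (W : Finset V) : Finset E :=
  Finset.univ.filter fun e => e ∈ F ∧ D.head e ∈ W ∧ D.tail e ∉ W

lemma lam_le_card_cut {W : Finset V} (hrW : r ∉ W) (hvW : v ∈ W) :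
    D.lam F r v ≤ (D.cut F W).card := by
  refine csSup_le ⟨0, [], rfl, by simp, List.Pairwise.nil⟩ ?_
  rintro _ ⟨P, rfl, hP, hd⟩
  refine length_le_card_of_forall_exists_mem hd fun p hp => ?_
  obtain ⟨e, he, hW⟩ := (hP p hp).1.exists_mem_head_mem_tail_notMem hrW hvW
  exact ⟨e, he, by simpa [cut] using And.intro ((hP p hp).2.1 e he) hW⟩

lemma lam_le_indeg (hvr : v ≠ r) : D.lam F r v ≤ D.indeg F v := by
  refine (lam_le_card_cut (W := {v}) (by simpa using hvr.symm)
    (Finset.mem_singleton_self v)).trans ?_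
  rw [indeg, ← Set.ncard_coe_finset]
  refine Set.ncard_le_ncard (fun e he => ?_) (Set.toFinite _)
  simp only [cut, Finset.coe_filter, Finset.mem_singleton] at he
  exact ⟨he.2.1, he.2.2.1⟩

end Lam

section Flows

noncomputable def incidence (D : Digraph' V E) (e : E) (x : V) : ℤ :=
  (if x = D.head e then 1 else 0) - if x = D.tail e then 1 else 0

noncomputable def excess (D : Digraph' V E) (S : Finset E) (x : V) : ℤ :=
  ∑ e ∈ S, D.incidence e x

def IsUnitFlow (D : Digraph' V E) (r v : V) (S : Finset E) : Prop :=
  ∀ x, x ≠ r → x ≠ v → D.excess S x = 0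

variable {S T : Finset E} {x : V}

lemma excess_insert {e : E} (he : e ∉ S) :
    D.excess (insert e S) x = D.excess S x + D.incidence e x := by
  rw [excess, Finset.sum_insert he, add_comm]
  rfl

lemma excess_erase {e : E} (he : e ∈ S) :
    D.excess (S.erase e) x = D.excess S x - D.incidence e x :=
  Finset.sum_erase_eq_sub he

lemma excess_sdiff (h : T ⊆ S) : D.excess (S \ T) x = D.excess S x - D.excess T x :=
  eq_sub_of_add_eq (Finset.sum_sdiff h)

lemma IsWalk.excess_toFinset {p : List E} (h : D.IsWalk u v p) (hp : p.Nodup) :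
    D.excess p.toFinset x = (if x = v then 1 else 0) - if x = u then 1 else 0 := by
  induction p generalizing u with
  | nil => rw [isWalk_nil] at h; subst h; simp [excess]
  | cons e p ih =>
    rw [List.toFinset_cons, excess_insert (by simpa using (List.nodup_cons.1 hp).1),
      ih h.2 (List.nodup_cons.1 hp).2, incidence, h.1]
    ring

lemma sum_excess_eq_card_cut [Fintype E] {W : Finset V}
    (hS : ∀ e ∈ S, D.tail e ∈ W → D.head e ∈ W) :
    ∑ x ∈ W, D.excess S x = (D.cut S W).card := by
  have hedge : ∀ e ∈ S, ∑ x ∈ W, D.incidence e x =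
      if D.head e ∈ W ∧ D.tail e ∉ W then 1 else 0 := by
    intro e he
    have := hS e he
    simp only [incidence, Finset.sum_sub_distrib, Finset.sum_ite_eq']
    split_ifs <;> tauto
  unfold excess
  rw [Finset.sum_comm, Finset.sum_congr rfl hedge, Finset.sum_boole]
  congr 2
  ext e
  simp [cut]

lemma sum_excess_eq_zero [Fintype V] [Fintype E] : ∑ x, D.excess S x = 0 := by
  rw [sum_excess_eq_card_cut (fun _ _ _ => Finset.mem_univ _)]
  simp [cut]

lemma reachableIn_of_excess_neg [Fintype V] [Fintype E] (hu : D.excess S u < 0)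
    (h : ∀ x, x ≠ u → x ≠ v → D.excess S x ≤ 0) : D.ReachableIn S u v := by
  by_contra hv
  set W := Finset.univ.filter (D.ReachableIn S u)
  have huW : u ∈ W := by simp [W, ReachableIn.refl]
  have hclosed : ∀ e ∈ S, D.tail e ∈ W → D.head e ∈ W := by
    simp only [W, Finset.mem_filter, Finset.mem_univ, true_and]
    exact fun e he hreach => hreach.step he
  have hrest : ∑ x ∈ W.erase u, D.excess S x ≤ 0 := by
    refine Finset.sum_nonpos fun x hx => h x (Finset.ne_of_mem_erase hx) ?_
    rintro rfl
    simp [W, hv] at hx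
  have := sum_excess_eq_card_cut hclosed
  rw [← Finset.add_sum_erase _ _ huW] at this
  omega

lemma excess_eq_neg_excess [Fintype V] [Fintype E] {r : V} (hvr : v ≠ r)
    (hS : D.IsUnitFlow r v S) : D.excess S r = -D.excess S v := by
  have := sum_excess_eq_zero (D := D) (S := S)
  rw [Finset.sum_eq_add r v hvr.symm (fun x _ hx => hS x hx.1 hx.2) (by simp) (by simp)] at this
  omega

lemma exists_edgeDisjoint_of_isUnitFlow [Fintype V] [Fintype E] {r : V} (hvr : v ≠ r) :
    ∀ (m : ℕ) (S : Finset E), D.IsUnitFlow r v S → D.excess S v = m →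
      ∃ P : List (List E), P.length = m ∧ (∀ p ∈ P, D.IsPathIn S r v p) ∧
        EdgeDisjoint P := by
  intro m
  induction m with
  | zero => exact fun _ _ _ => ⟨[], rfl, by simp, List.Pairwise.nil⟩
  | succ m ih =>
    intro S hS hm
    have hr : D.excess S r < 0 := by rw [excess_eq_neg_excess hvr hS, hm]; omega
    obtain ⟨p, hp⟩ :=
      (reachableIn_of_excess_neg hr fun x hxr hxv => (hS x hxr hxv).le).exists_isPathIn
    have hpS : p.toFinset ⊆ S := fun e he => hp.2.1 e (List.mem_toFinset.1 he)
    have hexc : ∀ x, D.excess (S \ p.toFinset) x =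
        D.excess S x - ((if x = v then 1 else 0) - if x = r then 1 else 0) := fun x => by
      rw [excess_sdiff hpS, hp.1.excess_toFinset hp.nodup]
    obtain ⟨P, hlen, hP, hd⟩ := ih (S \ p.toFinset)
      (fun x hxr hxv => by simp [hexc, hS x hxr hxv, hxr, hxv]) (by simp [hexc, hm, hvr])
    refine ⟨p :: P, by simp [hlen], ?_, List.Pairwise.cons ?_ hd⟩
    · rintro q (_ | ⟨_, hq⟩)
      exacts [hp, (hP q hq).mono (by simp)]
    · intro q hq e hep heq
      have := (hP q hq).2.1 e heq
      simp_all

end Flows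

section Residual

/-- The arc `Sum.inl e` traverses `e` forwards and `Sum.inr e` traverses it backwards. -/
def resid (D : Digraph' V E) : Digraph' V (E ⊕ E) where
  tail := Sum.elim D.tail D.head
  head := Sum.elim D.head D.tail

def residArcs (F : Set E) (S : Finset E) : Set (E ⊕ E) :=
  {a | a.elim (fun e => e ∈ F ∧ e ∉ S) (· ∈ S)}

noncomputable def toggle (S : Finset E) : E ⊕ E → Finset E :=
  Sum.elim (insert · S) (S.erase ·)

variable {S : Finset E} {a b : E ⊕ E}

lemma resid_head_swap : D.resid.head a.swap = D.resid.tail a := by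
  cases a <;> rfl

lemma excess_toggle {x : V} (ha : a ∈ residArcs F S) :
    D.excess (toggle S a) x = D.excess S x + D.resid.incidence a x := by
  cases a with
  | inl e => exact excess_insert ha.2
  | inr e =>
    rw [toggle, Sum.elim_inr, excess_erase (show e ∈ S from ha)]
    change _ = _ + ((if x = D.tail e then 1 else 0) - if x = D.head e then 1 else 0)
    rw [incidence]
    ring

lemma toggle_subset (ha : a ∈ residArcs F S) (hS : ↑S ⊆ F) : ↑(toggle S a) ⊆ F := by
  cases a with
  | inl e => simpa [toggle, Set.insert_subset_iff] using ⟨ha.1, hS⟩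
  | inr e => exact (Finset.coe_subset.2 (Finset.erase_subset e S)).trans hS

lemma mem_residArcs_toggle (hb : b ∈ residArcs F S) (hba : b ≠ a) (hbs : b ≠ a.swap) :
    b ∈ residArcs F (toggle S a) := by
  cases a <;> cases b <;> simp_all [residArcs, toggle]

lemma IsPathIn.augment {π : List (E ⊕ E)} (hπ : D.resid.IsPathIn (residArcs F S) u w π)
    (hS : ↑S ⊆ F) : ∃ S' : Finset E, ↑S' ⊆ F ∧
      ∀ x, D.excess S' x =
        D.excess S x + ((if x = w then 1 else 0) - if x = u then 1 else 0) := by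
  induction π generalizing u S with
  | nil =>
    rw [show u = w from hπ.1]
    exact ⟨S, hS, fun x => by ring⟩
  | cons a π ih =>
    have ha := hπ.2.1 a List.mem_cons_self
    have hnd := hπ.2.2
    simp only [List.map_cons, List.nodup_cons, List.mem_cons, not_or] at hnd
    have hrest : D.resid.IsPathIn (residArcs F (toggle S a)) (D.resid.head a) w π := by
      refine ⟨hπ.1.2, fun b hb => mem_residArcs_toggle (hπ.2.1 b (List.mem_cons_of_mem _ hb))
        ?_ ?_, by simpa using hnd.2⟩
      · rintro rfl
        exact hnd.2.1 (List.mem_map_of_mem hb)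
      · rintro rfl
        exact hnd.1.2 (hπ.1.1 ▸ resid_head_swap (D := D) ▸ List.mem_map_of_mem hb)
    obtain ⟨S', hS'F, hS'⟩ := ih hrest (toggle_subset ha hS)
    refine ⟨S', hS'F, fun x => ?_⟩
    rw [hS', excess_toggle ha, incidence, hπ.1.1]
    ring

variable [Fintype V] [Fintype E] {r : V}

lemma exists_cut_le_excess_of_not_reachableIn (hS : D.IsUnitFlow r v S)
    (hv : ¬ D.resid.ReachableIn (residArcs F S) r v) :
    ∃ W : Finset V, v ∈ W ∧ r ∉ W ∧ ((D.cut F W).card : ℤ) ≤ D.excess S v := by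
  set W := Finset.univ.filter fun x => ¬ D.resid.ReachableIn (residArcs F S) r x
  have hrW : r ∉ W := by simp [W, ReachableIn.refl]
  have hclosed : ∀ e ∈ S, D.tail e ∈ W → D.head e ∈ W := by
    simp only [W, Finset.mem_filter, Finset.mem_univ, true_and]
    exact fun e he ht hh => ht (hh.step (e := Sum.inr e) he)
  have hcut : D.cut F W ⊆ D.cut S W := by
    simp only [cut, W, Finset.subset_iff, Finset.mem_filter, Finset.mem_univ, true_and, not_not]
    exact fun e ⟨heF, hh, ht⟩ =>
      ⟨by_contra fun heS => hh (ht.step (e := Sum.inl e) ⟨heF, heS⟩), hh, ht⟩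
  refine ⟨W, by simpa [W] using hv, hrW, ?_⟩
  calc ((D.cut F W).card : ℤ) ≤ (D.cut S W).card := by exact_mod_cast Finset.card_le_card hcut
    _ = ∑ x ∈ W, D.excess S x := (sum_excess_eq_card_cut hclosed).symm
    _ = D.excess S v := Finset.sum_eq_single v
      (fun x hxW hxv => hS x (by rintro rfl; exact hrW hxW) hxv) (by simp [W, hv])

theorem exists_cut_card_le_lam (hvr : v ≠ r) (F : Set E) :
    ∃ W : Finset V, v ∈ W ∧ r ∉ W ∧ (D.cut F W).card ≤ D.lam F r v := by
  have hempty : ↑(∅ : Finset E) ⊆ F ∧ D.IsUnitFlow r v ∅ := by simp [IsUnitFlow, excess]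
  obtain ⟨S, hSmem, hmax⟩ := Finset.exists_max_image
    (Finset.univ.filter fun S : Finset E => ↑S ⊆ F ∧ D.IsUnitFlow r v S) (D.excess · v)
    ⟨∅, by simpa using hempty⟩
  simp only [Finset.mem_filter, Finset.mem_univ, true_and] at hSmem hmax
  obtain ⟨hSF, hS⟩ := hSmem
  have hv : ¬ D.resid.ReachableIn (residArcs F S) r v := fun hreach => by
    obtain ⟨π, hπ⟩ := hreach.exists_isPathIn
    obtain ⟨S', hS'F, hS'⟩ := hπ.augment hSF
    have := hmax S' ⟨hS'F, fun x hxr hxv => by simp [hS', hS x hxr hxv, hxr, hxv]⟩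
    simp [hS', hvr] at this
  obtain ⟨W, hvW, hrW, hW⟩ := exists_cut_le_excess_of_not_reachableIn hS hv
  have h0 : 0 ≤ D.excess S v := by simpa [excess] using hmax ∅ hempty
  obtain ⟨P, hlen, hP, hd⟩ :=
    exists_edgeDisjoint_of_isUnitFlow hvr _ S hS (Int.toNat_of_nonneg h0).symm
  have := le_lam hvr (fun p hp => (hP p hp).mono hSF) hd
  exact ⟨W, hvW, hrW, by omega⟩

end Residual

section Flames

variable [Fintype E] {r : V}

lemma cut_sdiff_singleton (f : E) (W : Finset V) : D.cut (F \ {f}) W = (D.cut F W).erase f := by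
  ext e
  simp only [cut, Finset.mem_erase, Finset.mem_filter, Finset.mem_univ, true_and,
    Set.mem_sdiff, Set.mem_singleton_iff]
  tauto

lemma card_cut_union_add_card_cut_inter_le (A B : Finset V) :
    (D.cut F (A ∪ B)).card + (D.cut F (A ∩ B)).card ≤
      (D.cut F A).card + (D.cut F B).card := by
  simp only [cut, Finset.card_filter, ← Finset.sum_add_distrib]
  refine Finset.sum_le_sum fun e _ => ?_
  by_cases hF : e ∈ F <;> by_cases hhA : D.head e ∈ A <;> by_cases hhB : D.head e ∈ B <;>
    by_cases htA : D.tail e ∈ A <;> by_cases htB : D.tail e ∈ B <;> simp [*]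

lemma exists_mem_head_eq_lam_sdiff_eq (hvr : v ≠ r) (hlt : D.lam F r v < D.indeg F v) :
    ∃ f ∈ F, D.head f = v ∧ D.lam (F \ {f}) r v = D.lam F r v := by
  obtain ⟨P, hlen, hP, hd⟩ := exists_edgeDisjoint_length_eq_lam (D := D) (F := F) hvr
  by_contra! hall
  have hused : ∀ f ∈ D.inEdges F v, ∃ p ∈ P, f ∈ p := by
    rintro f ⟨hfF, hfv⟩
    by_contra! hfree
    refine hall f hfF hfv
      (le_antisymm (lam_mono hvr Set.sdiff_subset) (hlen ▸ le_lam hvr ?_ hd))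
    exact fun p hp => ⟨(hP p hp).1, fun e he => ⟨(hP p hp).2.1 e he,
      fun hef => hfree p hp (Set.mem_singleton_iff.1 hef ▸ he)⟩, (hP p hp).2.2⟩
  have hlast : D.inEdges F v ⊆ ↑(P.filterMap List.getLast?).toFinset := by
    intro f hf
    obtain ⟨p, hp, hfp⟩ := hused f hf
    simp only [Finset.mem_coe, List.mem_toFinset, List.mem_filterMap]
    exact ⟨p, hp, by rw [List.getLast?_eq_some_getLast (List.ne_nil_of_mem hfp),
      (hP p hp).getLast_eq hfp hf.2]⟩
  have := (Set.ncard_le_ncard hlast (Set.toFinite _)).trans_eq (Set.ncard_coe_finset _)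
  have := (List.toFinset_card_le _).trans (List.length_filterMap_le List.getLast? P)
  rw [indeg] at hlt
  omega

lemma lam_sdiff_singleton_eq_of_lam_head_eq [Fintype V] {f : E} (hvr : v ≠ r)
    (hfv : D.head f = v) (hf : D.lam (F \ {f}) r v = D.lam F r v) (hwr : w ≠ r) :
    D.lam (F \ {f}) r w = D.lam F r w := by
  by_contra hne
  have hlt := lt_of_le_of_ne (lam_mono hwr Set.sdiff_subset) hne
  obtain ⟨W, hwW, hrW, hW⟩ := exists_cut_card_le_lam (D := D) hwr (F \ {f})
  rw [cut_sdiff_singleton] at hW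
  have hfW : f ∈ D.cut F W := by
    by_contra hfW
    rw [Finset.erase_eq_of_notMem hfW] at hW
    exact absurd (lam_le_card_cut (D := D) (F := F) hrW hwW) (by omega)
  obtain ⟨A, hvA, hrA, hA⟩ := exists_cut_card_le_lam (D := D) hvr F
  have hfAW : f ∈ D.cut F (A ∩ W) := by
    simp only [cut, Finset.mem_filter, Finset.mem_univ, true_and, Finset.mem_inter] at hfW ⊢
    exact ⟨hfW.1, ⟨hfv ▸ hvA, hfW.2.1⟩, fun h => hfW.2.2 h.2⟩
  have hunion := lam_le_card_cut (D := D) (F := F) (r := r) (W := A ∪ W) (by simp [hrA, hrW])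
    (Finset.mem_union_right _ hwW)
  have hinter := lam_le_card_cut (D := D) (F := F \ {f}) (r := r) (W := A ∩ W)
    (fun h => hrA (Finset.mem_inter.1 h).1)
    (Finset.mem_inter.2 ⟨hvA, hfv ▸ (Finset.mem_filter.1 hfW).2.2.1⟩)
  rw [cut_sdiff_singleton, hf] at hinter
  have := card_cut_union_add_card_cut_inter_le (D := D) (F := F) A W
  have := Finset.card_erase_add_one hfW
  have := Finset.card_erase_add_one hfAW
  omega

theorem exists_isFlame_lam_eq [Fintype V] (r : V) (F : Finset E) :
    ∃ H : Set E, D.IsFlame r H ∧ ∀ w, w ≠ r → D.lam H r w = D.lam F r w := by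
  induction F using Finset.strongInduction with
  | H F ih =>
    by_cases hflame : D.IsFlame r F
    · exact ⟨F, hflame, fun _ _ => rfl⟩
    obtain ⟨v, hvr, hne⟩ : ∃ v, v ≠ r ∧ D.indeg F v ≠ D.lam F r v := by
      simpa [IsFlame] using hflame
    obtain ⟨f, hfF, hfv, hf⟩ :=
      exists_mem_head_eq_lam_sdiff_eq hvr (lt_of_le_of_ne (lam_le_indeg hvr) hne.symm)
    obtain ⟨H, hH, hHlam⟩ := ih (F.erase f) (Finset.erase_ssubset hfF)
    refine ⟨H, hH, fun w hwr => ?_⟩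
    rw [hHlam w hwr, Finset.coe_erase, lam_sdiff_singleton_eq_of_lam_head_eq hvr hfv hf hwr]

end Flames

end Digraph'

open Digraph' in
theorem stmt3_general {V E : Type} [Fintype V] [Fintype E] (D : Digraph' V E) (r : V) :
    ∃ H : Set E, ∀ v, v ≠ r →
      D.lam Set.univ r v = D.lam H r v ∧ D.lam H r v = D.indeg H v := by
  obtain ⟨H, hH, hlam⟩ := exists_isFlame_lam_eq (D := D) r Finset.univ
  refine ⟨H, fun v hvr => ⟨?_, (hH v hvr).symm⟩⟩
  rw [hlam v hvr, Finset.coe_univ]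

open Digraph' in
/-- Lovász' theorem: there is a spanning subgraph `H` with
`λ_D(r,v) = λ_H(r,v) = ϱ_H(v)` for every `v ≠ r`. -/
theorem stmt3 {V E : Type} [Fintype V] [Fintype E] (D : Digraph' V E) (r : V)
    (hr : ∀ e, D.head e ≠ r) :
    ∃ H : Set E, ∀ v, v ≠ r →
      D.lam Set.univ r v = D.lam H r v ∧ D.lam H r v = D.indeg H v :=
  stmt3_general D r
end

section
/- Let D be a finite digraph with capacities x, y ∈ ℝ₊^E and suppose λ_y(u) < λ_x(u) for some u ∈ V−r. Then there exist an edge e ∈ E with head v and ε > 0 with x(e) − y(e) ≥ ε such that the polygammoid of v under capacity y + ε·χ_e equals { s + δ·χ_e : s ∈ G_y(v), 0 ≤ δ ≤ ε }. -/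
attribute [local instance] Classical.propDecidable

/-!
Let `m` be a maximum `r → u` flow under `y` and `W` the set of vertices reachable from `r` in its
residual network. Then `V - W` is a minimum cut, so `ϱ_y(V - W) = λ_y(u) < λ_x(u) ≤ ϱ_x(V - W)`,
and some edge `e` entering `V - W` has `y(e) < x(e)`; let `v` be its head.

For a flow `z` into `v` and a set `X ∌ r` containing `v` and `tail e`, all of `z(e)` enters `X`
along edges not ending at `v`; hence the excess of `z ≤ y + ε χ_e` on `e` can be removed along an
`r → v` subflow of `z` entering `v` only through `e`. Conversely, `δ` more units can be sent into
`v` through `e` once every such `X` has residual capacity at least `δ` for `z ≤ y`, arcs into `v`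
excluded. Comparing `z` with `m`, both conserved on `W ∩ X`, bounds this capacity below by the
residual capacity of `m` into `X` inside `W`, which is positive because `tail e ∈ W ∩ X` is
reachable from `r ∉ X`. So `ε` is taken below `x(e) - y(e)` and every positive residual capacity
of `m`.
-/

theorem Relation.ReflTransGen.exists_mem_rel_notMem {α : Type*} {R : α → α → Prop}
    {S : Set α} {a b : α} (h : Relation.ReflTransGen R a b) (ha : a ∈ S) (hb : b ∉ S) :
    ∃ c d, Relation.ReflTransGen R a c ∧ c ∈ S ∧ R c d ∧ d ∉ S := by
  induction h with
  | refl => exact absurd ha hb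
  | @tail c d hac hcd ih =>
    by_cases hc : c ∈ S
    · exact ⟨c, d, hac, hc, hcd, hb⟩
    · exact ih hc

open Finset Filter Topology

lemma Finset.sum_le_sum_of_le_add {ι : Type*} {s : Finset ι} {f g h : ι → ℝ}
    (hh : ∑ i ∈ s, h i = 0) (hfg : ∀ i ∈ s, f i ≤ g i + h i) : ∑ i ∈ s, f i ≤ ∑ i ∈ s, g i := by
  simpa [sum_add_distrib, hh] using sum_le_sum hfg

lemma exists_pos_forall_le_of_pos {ι : Type*} [Finite ι] (a : ι → ℝ) :
    ∃ μ > 0, ∀ i, 0 < a i → μ ≤ a i := by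
  have : ∀ i, ∀ᶠ μ in 𝓝[>] (0 : ℝ), 0 < a i → μ ≤ a i := fun i => by
    by_cases h : 0 < a i
    · exact ((eventually_le_nhds h).filter_mono nhdsWithin_le_nhds).mono fun _ h' _ => h'
    · exact Eventually.of_forall fun _ h' => absurd h' h
  obtain ⟨μ, h, hμ⟩ := ((eventually_all.2 this).and self_mem_nhdsWithin).exists
  exact ⟨μ, hμ, h⟩

lemma eventually_nonneg_add_mul {a b : ℝ} (ha : 0 ≤ a) (hb : a = 0 → 0 ≤ b) :
    ∀ᶠ η in 𝓝[>] (0 : ℝ), 0 ≤ a + η * b := by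
  rcases ha.eq_or_lt with rfl | ha
  · exact eventually_nhdsWithin_of_forall fun η hη => by
      simpa using mul_nonneg (le_of_lt hη) (hb rfl)
  · have : Tendsto (fun η => a + η * b) (𝓝[>] 0) (𝓝 a) :=
      ((continuous_const.add (continuous_id.mul continuous_const)).tendsto' 0 a
        (by simp)).mono_left nhdsWithin_le_nhds
    exact (this.eventually_const_lt ha).mono fun _ => le_of_lt

namespace Digraph'

variable {V E : Type} {D : Digraph' V E}

lemma chi_nonneg (e f : E) : 0 ≤ chi e f := by
  unfold chi; split_ifs <;> norm_num

lemma restrictIn_sub (v : V) (x y : E → ℝ) :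
    D.restrictIn v (x - y) = D.restrictIn v x - D.restrictIn v y := by
  funext f; simp only [restrictIn, Pi.sub_apply]; split_ifs <;> simp

section ResidualNetwork

def withReversed (D : Digraph' V E) : Digraph' V (E ⊕ E) :=
  ⟨Sum.elim D.tail D.head, Sum.elim D.head D.tail⟩

def residual (c m : E → ℝ) : E ⊕ E → ℝ := Sum.elim (c - m) m

def collapse (h : E ⊕ E → ℝ) : E → ℝ := h ∘ Sum.inl - h ∘ Sum.inr

/-- Paths do not continue from `t`: an `r → t` flow has no outflow at `t`. -/
def reach (D : Digraph' V E) (c m : E → ℝ) (r t : V) : Set V :=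
  {w | Relation.ReflTransGen (fun a b => a ≠ t ∧ ∃ g, D.withReversed.tail g = a ∧
    D.withReversed.head g = b ∧ 0 < residual c m g) r w}

variable {r t : V} {c m : E → ℝ}

lemma residual_nonneg (hm : ∀ f, 0 ≤ m f) (hmc : m ≤ c) (g : E ⊕ E) : 0 ≤ residual c m g := by
  cases g with
  | inl f => exact sub_nonneg.2 (hmc f)
  | inr f => exact hm f

lemma root_mem_reach : r ∈ D.reach c m r t := Relation.ReflTransGen.refl

lemma residual_eq_zero_of_mem_reach (hm : ∀ f, 0 ≤ m f) (hmc : m ≤ c)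
    (ht : t ∉ D.reach c m r t) {g : E ⊕ E} (hg : D.withReversed.tail g ∈ D.reach c m r t)
    (hg' : D.withReversed.head g ∉ D.reach c m r t) : residual c m g = 0 :=
  le_antisymm
    (not_lt.1 fun hpos => hg' (hg.tail ⟨ne_of_mem_of_not_mem hg ht, g, rfl, rfl, hpos⟩))
    (residual_nonneg hm hmc g)

end ResidualNetwork

section Flows

variable [Fintype E] {r t v w : V} {c m x y : E → ℝ}

lemma inflow_add : D.inflow (x + y) w = D.inflow x w + D.inflow y w := by
  simp only [inflow, Pi.add_apply, ← sum_add_distrib, ite_add_ite, add_zero]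

lemma outflow_add : D.outflow (x + y) w = D.outflow x w + D.outflow y w := by
  simp only [outflow, Pi.add_apply, ← sum_add_distrib, ite_add_ite, add_zero]

lemma inflow_sub : D.inflow (x - y) w = D.inflow x w - D.inflow y w := by
  simp only [inflow, Pi.sub_apply, ← sum_sub_distrib, ite_sub_ite, sub_zero]

lemma outflow_sub : D.outflow (x - y) w = D.outflow x w - D.outflow y w := by
  simp only [outflow, Pi.sub_apply, ← sum_sub_distrib, ite_sub_ite, sub_zero]

lemma inflow_smul (a : ℝ) : D.inflow (a • x) w = a * D.inflow x w := by
  simp only [inflow, Pi.smul_apply, smul_eq_mul, mul_sum, mul_ite, mul_zero]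

lemma outflow_smul (a : ℝ) : D.outflow (a • x) w = a * D.outflow x w := by
  simp only [outflow, Pi.smul_apply, smul_eq_mul, mul_sum, mul_ite, mul_zero]

lemma inflow_chi (e : E) : D.inflow (chi e) w = if D.head e = w then 1 else 0 := by
  rw [inflow, sum_eq_single e (fun f _ hf => by simp [chi, hf]) (by simp)]
  simp [chi]

lemma outflow_chi (e : E) : D.outflow (chi e) w = if D.tail e = w then 1 else 0 := by
  rw [outflow, sum_eq_single e (fun f _ hf => by simp [chi, hf]) (by simp)]
  simp [chi]

lemma inflow_eq_zero (h : ∀ f, D.head f = w → x f = 0) : D.inflow x w = 0 :=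
  sum_eq_zero fun f _ => by split_ifs with hf <;> simp [h f, hf]

lemma outflow_eq_zero (h : ∀ f, D.tail f = w → x f = 0) : D.outflow x w = 0 :=
  sum_eq_zero fun f _ => by split_ifs with hf <;> simp [h f, hf]

lemma eq_zero_of_outflow_eq_zero (hx : ∀ f, 0 ≤ x f) (h : D.outflow x w = 0) {f : E}
    (hf : D.tail f = w) : x f = 0 := by
  have := (sum_eq_zero_iff_of_nonneg fun f _ => ?_).1 h f (mem_univ f)
  · simpa [hf] using this
  · split_ifs <;> simp [hx]

lemma rhoSet_nonneg (hc : ∀ e, 0 ≤ c e) (X : Set V) : 0 ≤ D.rhoSet c X :=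
  sum_nonneg fun e _ => by split_ifs <;> simp [hc]

lemma rhoSet_add_smul_chi (c : E → ℝ) (a : ℝ) (e : E) (X : Set V) :
    D.rhoSet (c + a • chi e) X =
      D.rhoSet c X + if D.head e ∈ X ∧ D.tail e ∉ X then a else 0 := by
  have h : ∀ f, (if D.head f ∈ X ∧ D.tail f ∉ X then (c + a • chi e) f else 0) =
      (if D.head f ∈ X ∧ D.tail f ∉ X then c f else 0) +
        if f = e then (if D.head e ∈ X ∧ D.tail e ∉ X then a else 0) else 0 := by
    intro f
    by_cases hf : f = e <;> split_ifs <;> simp_all [chi]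
  rw [rhoSet, sum_congr rfl fun f _ => h f, sum_add_distrib, sum_ite_eq']
  simp [rhoSet]

lemma exists_lt_of_rhoSet_lt {c' : E → ℝ} {X : Set V} (h : D.rhoSet c X < D.rhoSet c' X) :
    ∃ e, D.head e ∈ X ∧ D.tail e ∉ X ∧ c e < c' e := by
  obtain ⟨e, -, he⟩ := exists_lt_of_sum_lt h
  by_cases hc : D.head e ∈ X ∧ D.tail e ∉ X
  · simp only [if_pos hc] at he
    exact ⟨e, hc.1, hc.2, he⟩
  · simp only [if_neg hc, lt_irrefl] at he

lemma isFlow_zero (r v : V) : D.IsFlow r v 0 := by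
  simp [IsFlow, inflow, outflow]

lemma IsFlow.smul (hx : D.IsFlow r v x) {a : ℝ} (ha : 0 ≤ a) : D.IsFlow r v (a • x) := by
  obtain ⟨hx0, hxc, hxr, hxv⟩ := hx
  exact ⟨fun f => mul_nonneg ha (hx0 f),
    fun w hwr hwv => by simp [inflow_smul, outflow_smul, hxc w hwr hwv],
    by simp [inflow_smul, hxr], by simp [outflow_smul, hxv]⟩

lemma IsFlow.sub (hx : D.IsFlow r v x) (hy : D.IsFlow r v y) (hyx : y ≤ x) :
    D.IsFlow r v (x - y) := by
  obtain ⟨-, hxc, hxr, hxv⟩ := hx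
  obtain ⟨-, hyc, hyr, hyv⟩ := hy
  exact ⟨fun f => sub_nonneg.2 (hyx f),
    fun w hwr hwv => by simp [inflow_sub, outflow_sub, hxc w hwr hwv, hyc w hwr hwv],
    by simp [inflow_sub, hxr, hyr], by simp [outflow_sub, hxv, hyv]⟩

lemma polygammoid_mono {c c' : E → ℝ} (h : c ≤ c') :
    D.polygammoid r v c ⊆ D.polygammoid r v c' := by
  rintro _ ⟨x, hx, hxc, rfl⟩
  exact ⟨x, hx, hxc.trans h, rfl⟩

lemma continuous_inflow (w : V) : Continuous fun z : E → ℝ => D.inflow z w :=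
  continuous_finsetSum _ fun e _ => by split_ifs <;> fun_prop

lemma continuous_outflow (w : V) : Continuous fun z : E → ℝ => D.outflow z w :=
  continuous_finsetSum _ fun e _ => by split_ifs <;> fun_prop

lemma isCompact_setOf_isFlow (r t : V) (c : E → ℝ) :
    IsCompact {z | D.IsFlow r t z ∧ z ≤ c} := by
  refine isCompact_Icc.of_isClosed_subset ?_ fun z hz => ⟨hz.1.1, hz.2⟩
  simp only [IsFlow, Pi.le_def, Set.ofPred_and, Set.ofPred_forall]
  have := D.continuous_inflow
  have := D.continuous_outflow
  exact .inter (.inter (isClosed_iInter fun e => isClosed_le (by fun_prop) (by fun_prop))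
    (.inter (isClosed_iInter fun u => isClosed_iInter fun _ => isClosed_iInter fun _ =>
      isClosed_eq (by fun_prop) (by fun_prop))
    (.inter (isClosed_eq (by fun_prop) (by fun_prop)) (isClosed_eq (by fun_prop) (by fun_prop)))))
    (isClosed_iInter fun e => isClosed_le (by fun_prop) (by fun_prop))

lemma exists_isGreatest_outflow (hc : ∀ e, 0 ≤ c e) : ∃ m, D.IsFlow r t m ∧ m ≤ c ∧
    IsGreatest {a | ∃ x, D.IsFlow r t x ∧ x ≤ c ∧ D.outflow x r = a} (D.outflow m r) := by
  obtain ⟨m, hm, hmax⟩ := (D.isCompact_setOf_isFlow r t c).exists_isMaxOn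
    ⟨0, isFlow_zero r t, hc⟩ (D.continuous_outflow r).continuousOn
  refine ⟨m, hm.1, hm.2, ⟨m, hm.1, hm.2, rfl⟩, ?_⟩
  rintro _ ⟨z, hz, hzc, rfl⟩
  exact hmax ⟨hz, hzc⟩

lemma exists_isFlow_outflow_eq_lamF (hc : ∀ e, 0 ≤ c e) :
    ∃ m, D.IsFlow r t m ∧ m ≤ c ∧ D.outflow m r = D.lamF r t c := by
  obtain ⟨m, hm, hmc, hmax⟩ := exists_isGreatest_outflow (D := D) (r := r) (t := t) hc
  exact ⟨m, hm, hmc, hmax.csSup_eq.symm⟩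

lemma le_lamF (hc : ∀ e, 0 ≤ c e) {z : E → ℝ} (hz : D.IsFlow r t z) (hzc : z ≤ c) :
    D.outflow z r ≤ D.lamF r t c := by
  obtain ⟨m, -, -, hmax⟩ := exists_isGreatest_outflow (D := D) (r := r) (t := t) hc
  rw [lamF, hmax.csSup_eq]
  exact hmax.2 ⟨z, hz, hzc, rfl⟩

lemma inflow_withReversed (h : E ⊕ E → ℝ) :
    D.withReversed.inflow h w = D.inflow (h ∘ Sum.inl) w + D.outflow (h ∘ Sum.inr) w := by
  simp [inflow, outflow, withReversed, Fintype.sum_sum_type]; rfl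

lemma outflow_withReversed (h : E ⊕ E → ℝ) :
    D.withReversed.outflow h w = D.outflow (h ∘ Sum.inl) w + D.inflow (h ∘ Sum.inr) w := by
  simp [inflow, outflow, withReversed, Fintype.sum_sum_type]; rfl

lemma outflow_collapse_sub_inflow (h : E ⊕ E → ℝ) :
    D.outflow (collapse h) w - D.inflow (collapse h) w =
      D.withReversed.outflow h w - D.withReversed.inflow h w := by
  rw [collapse, outflow_sub, inflow_sub, inflow_withReversed, outflow_withReversed]
  ring

lemma rhoSet_withReversed (c : E ⊕ E → ℝ) (X : Set V) :
    D.withReversed.rhoSet c X = ∑ f, ((if D.head f ∈ X ∧ D.tail f ∉ X then c (.inl f) else 0) +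
      (if D.tail f ∈ X ∧ D.head f ∉ X then c (.inr f) else 0)) := by
  simp [rhoSet, withReversed, Fintype.sum_sum_type, sum_add_distrib]; rfl

lemma exists_augmentation_of_mem_reach (hw : w ∈ D.reach c m r t) :
    ∃ h : E ⊕ E → ℝ, (∀ g, 0 ≤ h g) ∧ (∀ g, residual c m g ≤ 0 → h g = 0) ∧
      (∀ g, D.withReversed.tail g = t → h g = 0) ∧ ∀ a,
        D.withReversed.outflow h a - D.withReversed.inflow h a =
          (if r = a then 1 else 0) - (if w = a then 1 else 0) := by
  induction hw with
  | refl => exact ⟨0, fun _ => le_rfl, fun _ _ => rfl, fun _ _ => rfl, fun a => by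
      simp [inflow, outflow]⟩
  | tail _ hab ih =>
    obtain ⟨h, h0, hres, ht, hnet⟩ := ih
    obtain ⟨hat, g₀, rfl, rfl, hg₀⟩ := hab
    refine ⟨h + chi g₀, fun g => add_nonneg (h0 g) (chi_nonneg g₀ g), fun g hg => ?_,
      fun g hg => ?_, fun a => ?_⟩
    · have : g ≠ g₀ := by rintro rfl; linarith
      simp [hres g hg, chi, this]
    · have : g ≠ g₀ := by rintro rfl; exact hat hg
      simp [ht g hg, chi, this]
    · rw [outflow_add, inflow_add, outflow_chi, inflow_chi]
      linarith [hnet a]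

lemma exists_pos_add_smul_collapse_mem_Icc (hm : ∀ f, 0 ≤ m f) (hmc : m ≤ c)
    {h : E ⊕ E → ℝ} (h0 : ∀ g, 0 ≤ h g) (hres : ∀ g, residual c m g ≤ 0 → h g = 0) :
    ∃ η : ℝ, 0 < η ∧ m + η • collapse h ∈ Set.Icc 0 c := by
  have hfeas : ∀ᶠ η in 𝓝[>] (0 : ℝ), ∀ f, 0 ≤ m f + η * collapse h f ∧
      0 ≤ (c f - m f) + η * -collapse h f := by
    refine eventually_all.2 fun f => (eventually_nonneg_add_mul (hm f) fun hf => ?_).and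
      (eventually_nonneg_add_mul (sub_nonneg.2 (hmc f)) fun hf => ?_)
    · simp [collapse, hres (.inr f) (by simp [residual, hf]), h0]
    · simp [collapse, hres (.inl f) (by simp [residual, hf]), h0]
  obtain ⟨η, hfe, hη⟩ := (hfeas.and self_mem_nhdsWithin).exists
  refine ⟨η, hη, fun f => (hfe f).1, fun f => ?_⟩
  simp only [Pi.add_apply, Pi.smul_apply, smul_eq_mul]
  linarith [(hfe f).2]

/-- Otherwise a small multiple of an augmenting path increases the value of `m`. -/
lemma notMem_reach (hm : D.IsFlow r t m) (hmc : m ≤ c) (hc : ∀ e, 0 ≤ c e)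
    (hcr : ∀ f, D.head f = r → c f = 0) (htr : t ≠ r) (hmax : D.outflow m r = D.lamF r t c) :
    t ∉ D.reach c m r t := by
  intro ht
  obtain ⟨h, h0, hres, htail, hnet⟩ := exists_augmentation_of_mem_reach ht
  have hnet' : ∀ a, D.outflow (collapse h) a - D.inflow (collapse h) a =
      (if r = a then 1 else 0) - (if t = a then 1 else 0) := fun a =>
    (outflow_collapse_sub_inflow h).trans (hnet a)
  obtain ⟨η, hη, hfe⟩ := exists_pos_add_smul_collapse_mem_Icc hm.1 hmc h0 hres
  set p := m + η • collapse h
  obtain ⟨hp0, hpc⟩ := hfe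
  have hpr : D.inflow p r = 0 :=
    inflow_eq_zero fun f hf => le_antisymm (hcr f hf ▸ hpc f) (hp0 f)
  have hdt : D.outflow (collapse h) t = 0 := outflow_eq_zero fun f hf => by
    have hmf : m f = 0 := eq_zero_of_outflow_eq_zero hm.1 hm.2.2.2 hf
    simp [collapse, htail (.inl f) hf, hres (.inr f) (by simp [residual, hmf])]
  have hp : D.IsFlow r t p := by
    refine ⟨hp0, fun a har hat => ?_, hpr, ?_⟩
    · have h1 := hnet' a
      rw [if_neg (Ne.symm har), if_neg (Ne.symm hat), sub_zero, sub_eq_zero] at h1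
      rw [inflow_add, outflow_add, inflow_smul, outflow_smul, h1, hm.2.1 a har hat]
    · rw [outflow_add, outflow_smul, hm.2.2.2, hdt, mul_zero, add_zero]
  have hdr : D.inflow (collapse h) r = 0 := by
    rw [inflow_add, inflow_smul, hm.2.2.1, zero_add] at hpr
    exact (mul_eq_zero.1 hpr).resolve_left hη.ne'
  have hval : D.outflow p r = D.outflow m r + η := by
    have h1 := hnet' r
    rw [if_pos rfl, if_neg htr, hdr, sub_zero, sub_zero] at h1
    rw [outflow_add, outflow_smul, h1, mul_one]
  linarith [le_lamF hc hp hpc]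

end Flows

section Cuts

variable [Fintype V] [Fintype E] {r t u v : V} {c m y z : E → ℝ} {e : E}

lemma sum_inflow_sub_outflow (A : Set V) (x : E → ℝ) :
    ∑ w, (if w ∈ A then D.inflow x w - D.outflow x w else 0) =
      ∑ f, ((if D.head f ∈ A then x f else 0) - (if D.tail f ∈ A then x f else 0)) := by
  have h : ∀ w, (if w ∈ A then D.inflow x w - D.outflow x w else 0) =
      ∑ f, ((if D.head f = w ∧ w ∈ A then x f else 0) -
        (if D.tail f = w ∧ w ∈ A then x f else 0)) := by
    intro w
    by_cases hw : w ∈ A <;> simp [inflow, outflow, hw]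
  rw [sum_congr rfl fun w _ => h w, sum_comm]
  simp [sum_sub_distrib, ite_and]

lemma IsFlow.inflow_eq_sum_cut (hz : D.IsFlow r v z) {X : Set V} (hrX : r ∉ X) (hvX : v ∈ X) :
    D.inflow z v =
      ∑ f, ((if D.head f ∈ X then z f else 0) - (if D.tail f ∈ X then z f else 0)) := by
  rw [← sum_inflow_sub_outflow, sum_eq_single v (fun w _ hwv => ?_) (by simp)]
  · simp [hvX, hz.2.2.2]
  · split_ifs with hw
    · rw [hz.2.1 w (ne_of_mem_of_not_mem hw hrX) hwv, sub_self]
    · rfl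

lemma IsFlow.inflow_eq_outflow (hz : D.IsFlow r v z) (hvr : v ≠ r) :
    D.inflow z v = D.outflow z r := by
  refine (hz.inflow_eq_sum_cut (X := {r}ᶜ) (by simp) hvr).trans ?_
  conv_rhs => rw [← sub_zero (D.outflow z r), ← hz.2.2.1, outflow, inflow, ← sum_sub_distrib]
  refine sum_congr rfl fun f _ => ?_
  by_cases h1 : D.head f = r <;> by_cases h2 : D.tail f = r <;> simp [h1, h2]

lemma IsFlow.inflow_le_rhoSet (hz : D.IsFlow r v z) (hzc : z ≤ c) {X : Set V} (hrX : r ∉ X)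
    (hvX : v ∈ X) : D.inflow z v ≤ D.rhoSet c X := by
  rw [hz.inflow_eq_sum_cut hrX hvX]
  refine sum_le_sum fun f _ => ?_
  have := hz.1 f
  have := hzc f
  by_cases D.head f ∈ X <;> by_cases D.tail f ∈ X <;> simp [*]

lemma lamF_le_rhoSet (hc : ∀ e, 0 ≤ c e) {X : Set V} (hrX : r ∉ X) (htX : t ∈ X) :
    D.lamF r t c ≤ D.rhoSet c X := by
  obtain ⟨m, hm, hmc, hmax⟩ := exists_isFlow_outflow_eq_lamF (D := D) (r := r) (t := t) hc
  rw [← hmax, ← hm.inflow_eq_outflow (ne_of_mem_of_not_mem htX hrX)]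
  exact hm.inflow_le_rhoSet hmc hrX htX

lemma outflow_eq_rhoSet_compl_reach (hm : D.IsFlow r t m) (hmc : m ≤ c)
    (ht : t ∉ D.reach c m r t) (htr : t ≠ r) :
    D.outflow m r = D.rhoSet c (D.reach c m r t)ᶜ := by
  rw [← hm.inflow_eq_outflow htr, hm.inflow_eq_sum_cut (X := (D.reach c m r t)ᶜ)
    (by simpa using root_mem_reach) ht]
  refine sum_congr rfl fun f _ => ?_
  have h1 := residual_eq_zero_of_mem_reach hm.1 hmc ht (g := .inl f)
  have h2 := residual_eq_zero_of_mem_reach hm.1 hmc ht (g := .inr f)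
  simp only [withReversed, residual, Sum.elim_inl, Sum.elim_inr, Pi.sub_apply] at h1 h2
  by_cases hH : D.head f ∈ D.reach c m r t <;> by_cases hT : D.tail f ∈ D.reach c m r t <;>
    simp_all [sub_eq_zero]

theorem exists_isFlow_outflow_eq (htr : t ≠ r) (hc : ∀ e, 0 ≤ c e)
    (hcr : ∀ f, D.head f = r → c f = 0) {a : ℝ} (ha : 0 ≤ a)
    (hcut : ∀ X : Set V, r ∉ X → t ∈ X → a ≤ D.rhoSet c X) :
    ∃ g, D.IsFlow r t g ∧ g ≤ c ∧ D.outflow g r = a := by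
  obtain ⟨m, hm, hmc, hmax⟩ := exists_isFlow_outflow_eq_lamF (D := D) (r := r) (t := t) hc
  have ht := notMem_reach hm hmc hc hcr htr hmax
  have hle : a ≤ D.outflow m r := outflow_eq_rhoSet_compl_reach hm hmc ht htr ▸
    hcut (D.reach c m r t)ᶜ (by simpa using root_mem_reach) ht
  have hθ : a / D.outflow m r ≤ 1 := div_le_one_of_le₀ hle (ha.trans hle)
  refine ⟨(a / D.outflow m r) • m, hm.smul (div_nonneg ha (ha.trans hle)),
    fun f => (mul_le_of_le_one_left (hm.1 f) hθ).trans (hmc f), ?_⟩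
  rw [outflow_smul, div_mul_cancel_of_imp fun h => le_antisymm (h ▸ hle) ha]

lemma exists_isFlow_restrictIn_eq_smul_chi (hvr : v ≠ r) (hc : ∀ f, 0 ≤ c f)
    (hcr : ∀ f, D.head f = r → c f = 0) (hcv : ∀ f, D.head f = v → c f = 0)
    (he : D.head e = v) {δ : ℝ} (hδ : 0 ≤ δ)
    (hcut : ∀ X : Set V, r ∉ X → v ∈ X → D.tail e ∈ X → δ ≤ D.rhoSet c X) :
    ∃ g, D.IsFlow r v g ∧ g ≤ c + δ • chi e ∧ D.restrictIn v g = δ • chi e := by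
  have hchi : ∀ f, f ≠ e → chi e f = (0 : ℝ) := fun f hf => if_neg hf
  obtain ⟨g, hg, hgc, hval⟩ := exists_isFlow_outflow_eq (D := D) hvr (c := c + δ • chi e)
    (fun f => add_nonneg (hc f) (mul_nonneg hδ (chi_nonneg e f)))
    (fun f hf => by simp [hcr f hf, hchi f (by rintro rfl; exact hvr (he ▸ hf))]) hδ
    fun X hrX hvX => by
      rw [rhoSet_add_smul_chi]
      by_cases heX : D.tail e ∈ X
      · simpa [heX] using hcut X hrX hvX heX
      · simpa [heX, he, hvX] using rhoSet_nonneg hc X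
  have hg0 : ∀ f, D.head f = v → f ≠ e → g f = 0 := fun f hf hfe =>
    le_antisymm (by simpa [hcv f hf, hchi f hfe] using hgc f) (hg.1 f)
  have hge : g e = δ := by
    rw [← hval, ← hg.inflow_eq_outflow hvr, inflow, sum_eq_single e (fun f _ hfe => ?_) (by simp)]
    · simp [he]
    · split_ifs with hf
      exacts [hg0 f hf hfe, rfl]
  refine ⟨g, hg, hgc, funext fun f => ?_⟩
  by_cases hfe : f = e
  · subst hfe; simp [restrictIn, he, hge, chi]
  · by_cases hf : D.head f = v <;> simp [restrictIn, hf, hg0 f, hfe, chi]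

lemma IsFlow.le_rhoSet_indicator (hz : D.IsFlow r v z) {X : Set V} (hrX : r ∉ X) (hvX : v ∈ X)
    (he : D.head e = v) (heX : D.tail e ∈ X) :
    z e ≤ D.rhoSet ((D.head ⁻¹' {v})ᶜ.indicator z) X := by
  calc z e = ∑ f, (((if D.head f ∈ X then z f else 0) - (if D.tail f ∈ X then z f else 0)) -
        (if D.head f = v then z f else 0) + (if f = e then z f else 0)) := by
          rw [sum_add_distrib, sum_sub_distrib, ← hz.inflow_eq_sum_cut hrX hvX]
          simp [inflow]
    _ ≤ D.rhoSet ((D.head ⁻¹' {v})ᶜ.indicator z) X := by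
      refine sum_le_sum fun f _ => ?_
      have := hz.1 f
      by_cases hfe : f = e
      · subst hfe; simp [he, hvX, heX]
      · by_cases hf : D.head f = v
        · by_cases D.tail f ∈ X <;> simp [*]
        · by_cases D.head f ∈ X <;> by_cases D.tail f ∈ X <;> simp [*]

lemma exists_mem_polygammoid_of_le_add_smul_chi (hr : ∀ f, D.head f ≠ r) (hy : ∀ f, 0 ≤ y f)
    {ε : ℝ} (hε : 0 ≤ ε) (hz : D.IsFlow r (D.head e) z) (hzy : z ≤ y + ε • chi e) :
    ∃ s ∈ D.polygammoid r (D.head e) y, ∃ δ : ℝ, 0 ≤ δ ∧ δ ≤ ε ∧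
      D.restrictIn (D.head e) z = s + δ • chi e := by
  set δ := max (z e - y e) 0
  have hzye : z e ≤ y e + ε := by simpa [chi] using hzy e
  have hδz : δ ≤ z e := max_le (by linarith [hy e]) (hz.1 e)
  obtain ⟨g, hg, hgc, hgv⟩ := exists_isFlow_restrictIn_eq_smul_chi (hr e)
    (c := (D.head ⁻¹' {D.head e})ᶜ.indicator z) (Set.indicator_nonneg fun f _ => hz.1 f)
    (fun f hf => absurd hf (hr f)) (fun f hf => by simp [hf]) rfl (le_max_right _ _)
    fun X hrX hvX heX => hδz.trans (hz.le_rhoSet_indicator hrX hvX rfl heX)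
  have hge : g e = δ := by simpa [restrictIn, chi] using congrFun hgv e
  have hgz : g ≤ z := fun f => by
    by_cases hfe : f = e
    · subst hfe; rw [hge]; exact hδz
    · by_cases hf : D.head f = D.head e
      · have := congrFun hgv f
        simp only [restrictIn, if_pos hf, Pi.smul_apply, chi, if_neg hfe, smul_zero] at this
        rw [this]; exact hz.1 f
      · simpa [hf, chi, hfe] using hgc f
  refine ⟨D.restrictIn (D.head e) (z - g), ⟨z - g, hz.sub hg hgz, fun f => ?_, rfl⟩,
    δ, le_max_right _ _, max_le (by linarith) hε, ?_⟩
  · by_cases hfe : f = e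
    · subst hfe; simp only [Pi.sub_apply, hge]; linarith [le_max_left (z f - y f) 0]
    · have := hzy f
      simp only [Pi.add_apply, Pi.smul_apply, chi, if_neg hfe, smul_zero, add_zero] at this
      simp only [Pi.sub_apply]; linarith [hg.1 f]
  · rw [restrictIn_sub, hgv, sub_add_cancel]

lemma restrictIn_add_smul_chi_mem_polygammoid (hr : ∀ f, D.head f ≠ r)
    (hz : D.IsFlow r (D.head e) z) (hzy : z ≤ y) {δ : ℝ} (hδ : 0 ≤ δ)
    (hcut : ∀ X : Set V, r ∉ X → D.head e ∈ X → D.tail e ∈ X → δ ≤ D.withReversed.rhoSet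
      ((D.withReversed.head ⁻¹' {D.head e, r})ᶜ.indicator (residual y z)) X) :
    D.restrictIn (D.head e) z + δ • chi e ∈ D.polygammoid r (D.head e) (y + δ • chi e) := by
  have hres := residual_nonneg hz.1 hzy
  obtain ⟨g, hg, hgc, hgv⟩ := exists_isFlow_restrictIn_eq_smul_chi (D := D.withReversed)
    (e := .inl e) (hr e) (Set.indicator_nonneg fun g _ => hres g) (fun g hg => by simp [hg])
    (fun g hg => by simp [hg]) rfl hδ hcut
  have hgc' : ∀ g', g g' ≤ residual y z g' + δ * chi (.inl e) g' := fun g' =>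
    (hgc g').trans (add_le_add_left (Set.indicator_le_self' (fun g _ => hres g) g') _)
  have hin : ∀ g', D.withReversed.head g' = D.head e → g g' = δ * chi (.inl e) g' :=
    fun g' h => by simpa [restrictIn, h] using congrFun hgv g'
  have hout : ∀ g', D.withReversed.tail g' = D.head e → g g' = 0 := fun g' h =>
    eq_zero_of_outflow_eq_zero hg.1 hg.2.2.2 h
  have hl : ∀ f, g (.inl f) ≤ y f - z f + δ * chi e f := fun f => by
    simpa [residual, chi] using hgc' (.inl f)
  have hr' : ∀ f, g (.inr f) ≤ z f := fun f => by simpa [residual, chi] using hgc' (.inr f)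
  refine ⟨z + collapse g, ⟨fun f => ?_, fun a har hav => ?_, ?_, ?_⟩, fun f => ?_,
    funext fun f => ?_⟩
  · simp only [Pi.add_apply, collapse, Pi.sub_apply, Function.comp_apply]
    linarith [hr' f, hg.1 (.inl f)]
  · have h1 := outflow_collapse_sub_inflow g (D := D) (w := a)
    rw [hg.2.1 a har hav, sub_self] at h1
    rw [inflow_add, outflow_add, hz.2.1 a har hav]; linarith
  · exact inflow_eq_zero fun f hf => absurd hf (hr f)
  · rw [outflow_add, hz.2.2.2, zero_add]
    exact outflow_eq_zero fun f hf => by simp [collapse, hout (.inl f) hf, hin (.inr f) hf, chi]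
  · simp only [Pi.add_apply, collapse, Pi.sub_apply, Function.comp_apply, Pi.smul_apply,
      smul_eq_mul]
    linarith [hl f, hg.1 (.inr f)]
  · by_cases hf : D.head f = D.head e
    · simp [restrictIn, hf, collapse, hin (.inl f) hf, hout (.inr f) hf, chi]
    · have hfe : f ≠ e := by rintro rfl; exact hf rfl
      simp [restrictIn, hf, chi, hfe]

theorem polygammoid_add_smul_chi_eq (hr : ∀ f, D.head f ≠ r) (hy : ∀ f, 0 ≤ y f) {ε : ℝ}
    (hε : 0 ≤ ε) (hcut : ∀ z, D.IsFlow r (D.head e) z → z ≤ y → ∀ X : Set V, r ∉ X →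
      D.head e ∈ X → D.tail e ∈ X → ε ≤ D.withReversed.rhoSet
        ((D.withReversed.head ⁻¹' {D.head e, r})ᶜ.indicator (residual y z)) X) :
    D.polygammoid r (D.head e) (y + ε • chi e) =
      {t | ∃ s ∈ D.polygammoid r (D.head e) y, ∃ δ : ℝ, 0 ≤ δ ∧ δ ≤ ε ∧ t = s + δ • chi e} := by
  ext t
  constructor
  · rintro ⟨z, hz, hzy, rfl⟩
    exact exists_mem_polygammoid_of_le_add_smul_chi hr hy hε hz hzy
  · rintro ⟨_, ⟨z, hz, hzy, rfl⟩, δ, hδ, hδε, rfl⟩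
    refine polygammoid_mono (add_le_add le_rfl fun f => ?_)
      (restrictIn_add_smul_chi_mem_polygammoid hr hz hzy hδ fun X h1 h2 h3 =>
        hδε.trans (hcut z hz hzy X h1 h2 h3))
    exact mul_le_mul_of_nonneg_right hδε (chi_nonneg e f)

/-- With `W = D.reach y m r u`: edge by edge, the residual capacity of `m` into `X` inside `W`
is at most that of `z` plus the net flow of `z - m` into `W ∩ X` along the edge, and the latter
sums to zero since both flows are conserved on `W ∩ X`. -/
lemma rhoSet_residual_inside_reach_le (hm : D.IsFlow r u m) (hmy : m ≤ y)
    (huW : u ∉ D.reach y m r u) (hz : D.IsFlow r v z) (hzy : z ≤ y)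
    (hvW : v ∉ D.reach y m r u) {X : Set V} (hrX : r ∉ X) :
    D.withReversed.rhoSet ({g | D.withReversed.tail g ∈ D.reach y m r u ∧
        D.withReversed.head g ∈ D.reach y m r u}.indicator (residual y m)) X ≤
      D.withReversed.rhoSet ((D.withReversed.head ⁻¹' {v, r})ᶜ.indicator (residual y z)) X := by
  set W := D.reach y m r u
  have hC := sum_inflow_sub_outflow (D := D) (W ∩ X) (z - m)
  rw [sum_eq_zero fun w _ => ?_] at hC
  swap
  · split_ifs with hw
    · have hwr : w ≠ r := ne_of_mem_of_not_mem hw.2 hrX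
      rw [inflow_sub, outflow_sub, hz.2.1 w hwr (ne_of_mem_of_not_mem hw.1 hvW),
        hm.2.1 w hwr (ne_of_mem_of_not_mem hw.1 huW), sub_self]
    · rfl
  rw [rhoSet_withReversed, rhoSet_withReversed]
  refine sum_le_sum_of_le_add hC.symm fun f _ => ?_
  have h1 : D.tail f ∈ W → D.head f ∉ W → y f - m f = 0 := fun hT hH => by
    simpa [residual] using residual_eq_zero_of_mem_reach hm.1 hmy huW (g := .inl f) hT hH
  have h2 : D.head f ∈ W → D.tail f ∉ W → m f = 0 := fun hH hT => by
    simpa [residual] using residual_eq_zero_of_mem_reach hm.1 hmy huW (g := .inr f) hH hT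
  have := hz.1 f; have := hm.1 f; have := hzy f; have := hmy f
  have hTv : D.tail f ∈ W → D.tail f ≠ v := fun h => ne_of_mem_of_not_mem h hvW
  have hHv : D.head f ∈ W → D.head f ≠ v := fun h => ne_of_mem_of_not_mem h hvW
  have hTr : D.tail f ∈ X → D.tail f ≠ r := fun h => ne_of_mem_of_not_mem h hrX
  have hHr : D.head f ∈ X → D.head f ≠ r := fun h => ne_of_mem_of_not_mem h hrX
  by_cases hT : D.tail f ∈ W <;> by_cases hH : D.head f ∈ W <;> by_cases hTX : D.tail f ∈ X <;>
    by_cases hHX : D.head f ∈ X <;>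
    simp [Set.indicator_apply, withReversed, residual, hT, hH, hTX, hHX, hTv, hHv, hTr, hHr] <;>
    (try have := h1 ‹_› ‹_›) <;> (try have := h2 ‹_› ‹_›) <;> (try split_ifs) <;> linarith

lemma le_rhoSet_residual_of_mem_reach (hm : D.IsFlow r u m) (hmy : m ≤ y)
    (huW : u ∉ D.reach y m r u) {μ : ℝ} (hμ : ∀ g, 0 < residual y m g → μ ≤ residual y m g)
    (hz : D.IsFlow r v z) (hzy : z ≤ y) (hvW : v ∉ D.reach y m r u) {X : Set V} (hrX : r ∉ X)
    (htW : t ∈ D.reach y m r u) (htX : t ∈ X) :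
    μ ≤ D.withReversed.rhoSet ((D.withReversed.head ⁻¹' {v, r})ᶜ.indicator (residual y z)) X := by
  obtain ⟨a, b, hra, haX, ⟨hau, g, rfl, rfl, hg⟩, hbX⟩ :=
    Relation.ReflTransGen.exists_mem_rel_notMem htW (S := Xᶜ) hrX (by simpa using htX)
  have hgW : D.withReversed.head g ∈ D.reach y m r u := hra.tail ⟨hau, g, rfl, rfl, hg⟩
  have hgW' : D.withReversed.tail g ∈ D.reach y m r u := hra
  refine (hμ g hg).trans
    (le_trans ?_ (rhoSet_residual_inside_reach_le hm hmy huW hz hzy hvW hrX))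
  refine le_trans (le_of_eq ?_) (single_le_sum (fun g' _ => ?_) (mem_univ g))
  · simp only [Set.mem_compl_iff, not_not] at haX hbX
    simp [haX, hbX, hgW, hgW']
  · split_ifs
    exacts [Set.indicator_nonneg (fun g _ => residual_nonneg hm.1 hmy g) g', le_rfl]

end Cuts

end Digraph'

open Digraph' in
theorem stmt5_general {V E : Type} [Fintype V] [Fintype E] (D : Digraph' V E)
    (r : V) (hr : ∀ e, D.head e ≠ r)
    (x y : E → ℝ) (hx : ∀ e, 0 ≤ x e) (hy : ∀ e, 0 ≤ y e)
    (u : V) (hu : u ≠ r) (hlt : D.lamF r u y < D.lamF r u x) :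
    ∃ (e : E) (ε : ℝ), 0 < ε ∧ ε ≤ x e - y e ∧
      D.polygammoid r (D.head e) (y + ε • chi e) =
        {t : E → ℝ | ∃ s ∈ D.polygammoid r (D.head e) y,
          ∃ δ : ℝ, 0 ≤ δ ∧ δ ≤ ε ∧ t = s + δ • chi e} := by
  obtain ⟨m, hm, hmy, hmax⟩ := exists_isFlow_outflow_eq_lamF (D := D) (r := r) (t := u) hy
  have huW := notMem_reach hm hmy hy (fun f hf => absurd hf (hr f)) hu hmax
  have hrW : r ∉ (D.reach y m r u)ᶜ := by simpa using root_mem_reach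
  obtain ⟨e, hevW, heW, hye⟩ := exists_lt_of_rhoSet_lt <|
    outflow_eq_rhoSet_compl_reach hm hmy huW hu ▸ hmax ▸ hlt.trans_le (lamF_le_rhoSet hx hrW huW)
  obtain ⟨μ, hμ, hμle⟩ := exists_pos_forall_le_of_pos (residual y m)
  have hε : 0 < min (x e - y e) μ := lt_min (sub_pos.2 hye) hμ
  refine ⟨e, _, hε, min_le_left _ _, polygammoid_add_smul_chi_eq hr hy hε.le
    fun z hz hzy X hrX hvX heX => (min_le_right _ _).trans ?_⟩
  exact le_rhoSet_residual_of_mem_reach hm hmy huW hμle hz hzy hevW hrX (not_not.1 heW) heX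

open Digraph' in
/-- Fractional key lemma: if `λ_y(u) < λ_x(u)` then some edge `e` and `ε > 0`
with `x(e) - y(e) ≥ ε` satisfy
`G_{y+ε·χ_e}(v) = { s + δ·χ_e : s ∈ G_y(v), 0 ≤ δ ≤ ε }` where `v` is the head of `e`. -/
theorem stmt5 {V E : Type} [Fintype V] [Fintype E] (D : Digraph' V E)
    (hsimple : D.NoParallel) (r : V) (hr : ∀ e, D.head e ≠ r)
    (x y : E → ℝ) (hx : ∀ e, 0 ≤ x e) (hy : ∀ e, 0 ≤ y e)
    (u : V) (hu : u ≠ r) (hlt : D.lamF r u y < D.lamF r u x) :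
    ∃ (e : E) (ε : ℝ), 0 < ε ∧ ε ≤ x e - y e ∧
      D.polygammoid r (D.head e) (y + ε • chi e) =
        {t : E → ℝ | ∃ s ∈ D.polygammoid r (D.head e) y,
          ∃ δ : ℝ, 0 ≤ δ ∧ δ ≤ ε ∧ t = s + δ • chi e} :=
  stmt5_general D r hr x y hx hy u hu hlt
end
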